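/- arXiv:2103.10134 — 2 statements merged into one kernel-verified Lean document; each statement's English description precedes it below -/
import Mathlib

section
/- The Gibbs non-stationary kernel k(x,x') = √(2ℓ(x)ℓ(x')/(ℓ(x)²+ℓ(x')²)) · exp(−(x−x')²/(ℓ(x)²+ℓ(x')²)), where ℓ : ℝ → ℝ is a positive function, is a positive semidefinite kernel on ℝ. -/
def IsPSDKernel {X : Type*} (k : X → X → ℝ) : Prop :=
  (∀ x y, k x y = k y x) ∧
  ∀ (n : ℕ) (x : Fin n → X) (c : Fin n → ℝ),
    0 ≤ ∑ i, ∑ j, c i * c j * k (x i) (x j)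

/-!
The kernel is, up to the factor `√(2/π)`, the covariance `∫ g_u(x) g_u(x') du` of the Gaussian
features `g_u(x) = exp (-(x - u)² / ℓ(x)²) / √ℓ(x)`: completing the square in `u` turns the
product of two Gaussians into a Gaussian in `u` times `exp (-(x - x')² / (ℓ(x)² + ℓ(x')²))`.
A covariance of features is positive semidefinite, since `∑ᵢ ∑ⱼ cᵢ cⱼ ∫ g_u(xᵢ) g_u(xⱼ) du`
is the integral of the square `(∑ᵢ cᵢ g_u(xᵢ))²`.
-/

open Real MeasureTheory

theorem IsPSDKernel.const_mul {X : Type*} {k : X → X → ℝ} (hk : IsPSDKernel k) {a : ℝ}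
    (ha : 0 ≤ a) : IsPSDKernel (fun x y => a * k x y) := by
  refine ⟨fun x y => congrArg (a * ·) (hk.1 x y), fun n x c => ?_⟩
  calc (0 : ℝ) ≤ a * ∑ i, ∑ j, c i * c j * k (x i) (x j) := mul_nonneg ha (hk.2 n x c)
    _ = ∑ i, ∑ j, c i * c j * (a * k (x i) (x j)) := by
        simp only [Finset.mul_sum, mul_left_comm a]

theorem isPSDKernel_integral_mul {X Ω : Type*} [MeasurableSpace Ω] (μ : Measure Ω)
    (φ : Ω → X → ℝ) (hφ : ∀ x y, Integrable (fun ω => φ ω x * φ ω y) μ) :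
    IsPSDKernel (fun x y => ∫ ω, φ ω x * φ ω y ∂μ) := by
  refine ⟨fun x y => by simp only [mul_comm], fun n x c => ?_⟩
  have hterm : ∀ i j, Integrable (fun ω => c i * φ ω (x i) * (c j * φ ω (x j))) μ := fun i j =>
    ((hφ (x i) (x j)).const_mul (c i * c j)).congr (.of_forall fun ω => by ring)
  calc (0 : ℝ) ≤ ∫ ω, (∑ i, c i * φ ω (x i)) ^ 2 ∂μ := integral_nonneg fun ω => sq_nonneg _
    _ = ∫ ω, ∑ i, ∑ j, c i * φ ω (x i) * (c j * φ ω (x j)) ∂μ := by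
        simp only [sq, Finset.sum_mul_sum]
    _ = ∑ i, ∑ j, ∫ ω, c i * φ ω (x i) * (c j * φ ω (x j)) ∂μ := by
        rw [integral_finsetSum _ fun i _ => integrable_finsetSum _ fun j _ => hterm i j]
        exact Finset.sum_congr rfl fun i _ => integral_finsetSum _ fun j _ => hterm i j
    _ = ∑ i, ∑ j, c i * c j * ∫ ω, φ ω (x i) * φ ω (x j) ∂μ := by
        simp only [← integral_const_mul, mul_mul_mul_comm]

theorem exp_neg_sq_div_mul_exp_neg_sq_div {s t : ℝ} (hs : 0 < s) (ht : 0 < t) (x y u : ℝ) :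
    exp (-(x - u) ^ 2 / s) * exp (-(y - u) ^ 2 / t) =
      exp (-((s + t) / (s * t)) * (u - (t * x + s * y) / (s + t)) ^ 2) *
        exp (-(x - y) ^ 2 / (s + t)) := by
  rw [← exp_add, ← exp_add]
  congr 1
  field_simp
  ring

theorem integrable_exp_neg_sq_div_mul_exp_neg_sq_div {s t : ℝ} (hs : 0 < s) (ht : 0 < t)
    (x y : ℝ) : Integrable (fun u => exp (-(x - u) ^ 2 / s) * exp (-(y - u) ^ 2 / t)) := by
  simp only [exp_neg_sq_div_mul_exp_neg_sq_div hs ht]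
  exact ((integrable_exp_neg_mul_sq (by positivity)).comp_sub_right _).mul_const _

theorem integral_exp_neg_sq_div_mul_exp_neg_sq_div {s t : ℝ} (hs : 0 < s) (ht : 0 < t)
    (x y : ℝ) :
    ∫ u, exp (-(x - u) ^ 2 / s) * exp (-(y - u) ^ 2 / t) =
      √(π * (s * t) / (s + t)) * exp (-(x - y) ^ 2 / (s + t)) := by
  simp only [exp_neg_sq_div_mul_exp_neg_sq_div hs ht]
  rw [integral_mul_const, integral_sub_right_eq_self (fun u => exp (-_ * u ^ 2)),
    integral_gaussian, div_div_eq_mul_div]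

noncomputable def gibbsFeature (ℓ : ℝ → ℝ) (u x : ℝ) : ℝ :=
  exp (-(x - u) ^ 2 / ℓ x ^ 2) / √(ℓ x)

theorem gibbsFeature_mul (ℓ : ℝ → ℝ) (u x y : ℝ) :
    gibbsFeature ℓ u x * gibbsFeature ℓ u y =
      (√(ℓ x) * √(ℓ y))⁻¹ * (exp (-(x - u) ^ 2 / ℓ x ^ 2) * exp (-(y - u) ^ 2 / ℓ y ^ 2)) := by
  simp only [gibbsFeature]
  ring

theorem integral_gibbsFeature_mul {ℓ : ℝ → ℝ} (hℓ : ∀ x, 0 < ℓ x) (x y : ℝ) :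
    √(2 / π) * ∫ u, gibbsFeature ℓ u x * gibbsFeature ℓ u y =
      √(2 * ℓ x * ℓ y / (ℓ x ^ 2 + ℓ y ^ 2)) * exp (-(x - y) ^ 2 / (ℓ x ^ 2 + ℓ y ^ 2)) := by
  have ha := hℓ x
  have hb := hℓ y
  simp only [gibbsFeature_mul]
  rw [integral_const_mul, integral_exp_neg_sq_div_mul_exp_neg_sq_div (pow_pos ha 2) (pow_pos hb 2),
    ← mul_assoc, ← mul_assoc]
  congr 1
  rw [← sqrt_mul ha.le, ← sqrt_inv, ← sqrt_mul (by positivity), ← sqrt_mul (by positivity)]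
  congr 1
  field_simp

theorem integrable_gibbsFeature_mul {ℓ : ℝ → ℝ} (hℓ : ∀ x, 0 < ℓ x) (x y : ℝ) :
    Integrable (fun u => gibbsFeature ℓ u x * gibbsFeature ℓ u y) := by
  simp only [gibbsFeature_mul]
  exact (integrable_exp_neg_sq_div_mul_exp_neg_sq_div (pow_pos (hℓ x) 2) (pow_pos (hℓ y) 2)
    x y).const_mul _

theorem gibbs_kernel_is_psd (ℓ : ℝ → ℝ) (hℓ : ∀ x, 0 < ℓ x) :
    IsPSDKernel (fun x x' : ℝ =>
      Real.sqrt (2 * ℓ x * ℓ x' / (ℓ x ^ 2 + ℓ x' ^ 2)) *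
        Real.exp (-(x - x')^2 / (ℓ x ^ 2 + ℓ x' ^ 2))) := by
  have h := (isPSDKernel_integral_mul volume (gibbsFeature ℓ)
    (integrable_gibbsFeature_mul hℓ)).const_mul (sqrt_nonneg (2 / π))
  simpa only [integral_gibbsFeature_mul hℓ] using h
end

section
/- Adding more data never increases GP posterior variance: let the augmented Gram matrix on n+1 training points be positive definite; then the predictive variance at a test point using all n+1 points is less than or equal to the predictive variance using only the first n points, i.e., k** − k̃*ᵀ(K̃+σ²I)⁻¹k̃* ≤ k** − k*ᵀ(K+σ²I)⁻¹k*, where K̃, k̃* are the (n+1)-point Gram matrix and cross-covariance vector extending K, k*. -/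
/-!
The predictive variance is `k** - q(k*)` with `q(v) = v ⬝ (K + σ²I)⁻¹ v`, so it suffices that `q`
can only grow when a training point is added. For positive definite `B`, `v ⬝ B⁻¹ v` is the maximum
of `2 x ⬝ v - x ⬝ B x` over all `x`. The optimiser for the first `n` points, padded with a zero,
is an admissible `x` for the `n + 1` points and attains the same value there.
-/

open Matrix

namespace Matrix

variable {ι κ : Type*} [Fintype ι] [DecidableEq ι] [Fintype κ] [DecidableEq κ]

theorem PosDef.two_mul_dotProduct_sub_le_dotProduct_inv_mulVec {B : Matrix ι ι ℝ}
    (hB : B.PosDef) (v x : ι → ℝ) :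
    2 * (x ⬝ᵥ v) - x ⬝ᵥ B *ᵥ x ≤ v ⬝ᵥ B⁻¹ *ᵥ v := by
  set r := B⁻¹ *ᵥ v
  have hBr : B *ᵥ r = v := by
    rw [mulVec_mulVec, mul_nonsing_inv _ hB.det_pos.ne'.isUnit, one_mulVec]
  have hrBx : r ⬝ᵥ B *ᵥ x = x ⬝ᵥ v := by
    rw [dotProduct_mulVec, ← mulVec_transpose, ← conjTranspose_eq_transpose_of_trivial,
      hB.isHermitian.eq, hBr, dotProduct_comm]
  -- completing the square around the maximiser `r = B⁻¹ v`
  have hnonneg : 0 ≤ (r - x) ⬝ᵥ B *ᵥ (r - x) := by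
    simpa using hB.posSemidef.dotProduct_mulVec_nonneg (r - x)
  rw [mulVec_sub, dotProduct_sub, sub_dotProduct, sub_dotProduct, hBr, hrBx,
    dotProduct_comm r v] at hnonneg
  linarith

theorem PosDef.dotProduct_inv_mulVec_transpose_mul_mul_le {B : Matrix ι ι ℝ} (hB : B.PosDef)
    (P : Matrix ι κ ℝ) (hPBP : IsUnit (Pᵀ * B * P).det) (v : ι → ℝ) :
    (Pᵀ *ᵥ v) ⬝ᵥ (Pᵀ * B * P)⁻¹ *ᵥ (Pᵀ *ᵥ v) ≤ v ⬝ᵥ B⁻¹ *ᵥ v := by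
  set u := Pᵀ *ᵥ v
  set w := (Pᵀ * B * P)⁻¹ *ᵥ u
  have hw : (Pᵀ * B * P) *ᵥ w = u := by
    rw [mulVec_mulVec, mul_nonsing_inv _ hPBP, one_mulVec]
  have hPw_v : (P *ᵥ w) ⬝ᵥ v = w ⬝ᵥ u := by
    rw [dotProduct_comm, dotProduct_mulVec, ← mulVec_transpose, dotProduct_comm]
  have hPw_B : (P *ᵥ w) ⬝ᵥ B *ᵥ (P *ᵥ w) = w ⬝ᵥ u := by
    rw [← hw, dotProduct_comm (P *ᵥ w), dotProduct_mulVec, ← mulVec_transpose, dotProduct_comm,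
      ← mulVec_mulVec, ← mulVec_mulVec]
  calc u ⬝ᵥ (Pᵀ * B * P)⁻¹ *ᵥ u
      = 2 * ((P *ᵥ w) ⬝ᵥ v) - (P *ᵥ w) ⬝ᵥ B *ᵥ (P *ᵥ w) := by
        rw [hPw_v, hPw_B, dotProduct_comm]; ring
    _ ≤ v ⬝ᵥ B⁻¹ *ᵥ v := hB.two_mul_dotProduct_sub_le_dotProduct_inv_mulVec v _

theorem PosDef.dotProduct_inv_submatrix_mulVec_le {B : Matrix ι ι ℝ} (hB : B.PosDef)
    {e : κ → ι} (he : Function.Injective e) (v : ι → ℝ) :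
    (v ∘ e) ⬝ᵥ (B.submatrix e e)⁻¹ *ᵥ (v ∘ e) ≤ v ⬝ᵥ B⁻¹ *ᵥ v := by
  set P : Matrix ι κ ℝ := (1 : Matrix ι ι ℝ).submatrix id e
  have hPBP : Pᵀ * B * P = B.submatrix e e := by
    ext i j; simp [P, mul_apply, one_apply]
  have hPv : Pᵀ *ᵥ v = v ∘ e := by
    ext i; simp [P, mulVec, dotProduct, one_apply]
  rw [← hPBP, ← hPv]
  exact hB.dotProduct_inv_mulVec_transpose_mul_mul_le P
    (hPBP ▸ (hB.submatrix he).det_pos.ne'.isUnit) v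

end Matrix

theorem gp_variance_decreases_with_data_general {n : ℕ}
    (K : Matrix (Fin n) (Fin n) ℝ) (kstar : Fin n → ℝ)
    (Ktil : Matrix (Fin (n+1)) (Fin (n+1)) ℝ) (kstil : Fin (n+1) → ℝ)
    (kss σ2 : ℝ) (hσ : 0 < σ2)
    (hext : ∀ i j : Fin n, K i j = Ktil i.castSucc j.castSucc)
    (hkext : ∀ i : Fin n, kstar i = kstil i.castSucc)
    (hKtil : Ktil.PosSemidef) :
    kss - kstil ⬝ᵥ (Ktil + σ2 • (1 : Matrix (Fin (n+1)) (Fin (n+1)) ℝ))⁻¹ *ᵥ kstil ≤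
      kss - kstar ⬝ᵥ (K + σ2 • (1 : Matrix (Fin n) (Fin n) ℝ))⁻¹ *ᵥ kstar := by
  have hB : (Ktil + σ2 • (1 : Matrix (Fin (n+1)) (Fin (n+1)) ℝ)).PosDef :=
    PosDef.posSemidef_add hKtil (PosDef.one.smul hσ)
  have hK : K + σ2 • (1 : Matrix (Fin n) (Fin n) ℝ) =
      (Ktil + σ2 • (1 : Matrix (Fin (n+1)) (Fin (n+1)) ℝ)).submatrix Fin.castSucc Fin.castSucc := by
    ext i j; simp [hext, one_apply]
  have hk : kstar = kstil ∘ Fin.castSucc := funext hkext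
  rw [hK, hk]
  exact sub_le_sub_left (hB.dotProduct_inv_submatrix_mulVec_le (Fin.castSucc_injective n) kstil) kss

/-- Adding one more training observation never increases the GP predictive variance. -/
theorem gp_variance_decreases_with_data {n : ℕ}
    (K : Matrix (Fin n) (Fin n) ℝ) (kstar : Fin n → ℝ)
    (Ktil : Matrix (Fin (n+1)) (Fin (n+1)) ℝ) (kstil : Fin (n+1) → ℝ)
    (kss σ2 : ℝ) (hσ : 0 < σ2)
    (hext : ∀ i j : Fin n, K i j = Ktil i.castSucc j.castSucc)
    (hkext : ∀ i : Fin n, kstar i = kstil i.castSucc)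
    (hKtil : Ktil.PosSemidef)
    (haug : (Matrix.fromBlocks (Matrix.of fun _ _ => kss) (Matrix.of fun _ j => kstil j)
      (Matrix.of fun i _ => kstil i)
      (Ktil + σ2 • (1 : Matrix (Fin (n+1)) (Fin (n+1)) ℝ)) :
        Matrix (Fin 1 ⊕ Fin (n+1)) (Fin 1 ⊕ Fin (n+1)) ℝ).PosSemidef) :
    kss - kstil ⬝ᵥ (Ktil + σ2 • (1 : Matrix (Fin (n+1)) (Fin (n+1)) ℝ))⁻¹ *ᵥ kstil ≤
      kss - kstar ⬝ᵥ (K + σ2 • (1 : Matrix (Fin n) (Fin n) ℝ))⁻¹ *ᵥ kstar :=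
  gp_variance_decreases_with_data_general K kstar Ktil kstil kss σ2 hσ hext hkext hKtil
end
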